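/- arXiv:1312.7473 — 2 statements merged into one kernel-verified Lean document; each statement's English description precedes it below -/
import Mathlib

section
/- Let λ ∈ ℝ^n with λ_1 ≥ ... ≥ λ_n ≥ 0 and z ∈ ℝ^n with z_i ≥ 0. Then Σ_{i=1}^n λ_i z_{(i)} equals the minimum of Σ_{k=1}^n v_k + Σ_{i=1}^n w_i over all v, w ∈ ℝ^n satisfying v_i + w_k ≥ λ_k z_i for all i, k ∈ {1,...,n}. -/
open Finset

theorem tele_sum_aux (f : ℕ → ℝ) {m n : ℕ} (h : m ≤ n) :
    ∑ j ∈ Finset.Ico m n, (f j - f (j+1)) = f m - f n := by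
  induction n, h using Nat.le_induction with
  | base => simp
  | succ n hmn ih => rw [Finset.sum_Ico_succ_top hmn, ih]; ring

/-- LP-duality representation: Σ λ_i z_{(i)} is the minimum of Σ v_k + Σ w_i
subject to v_i + w_k ≥ λ_k z_i. -/
theorem stmt_7 (n : ℕ) (l z : Fin n → ℝ)
    (hl : ∀ i j : Fin n, i ≤ j → l j ≤ l i) (hln : ∀ i, 0 ≤ l i)
    (hz : ∀ i, 0 ≤ z i)
    (σ₀ : Equiv.Perm (Fin n)) (hσ₀ : ∀ i j : Fin n, i ≤ j → z (σ₀ j) ≤ z (σ₀ i)) :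
    IsLeast {c : ℝ | ∃ v w : Fin n → ℝ,
        (∀ i k : Fin n, l k * z i ≤ v i + w k) ∧ c = ∑ k, v k + ∑ i, w i}
      (∑ i, l i * z (σ₀ i)) := by
  classical
  set A : ℕ → ℝ := fun j => if h : j < n then z (σ₀ ⟨j, h⟩) else 0 with hAdef
  set L : ℕ → ℝ := fun j => if h : j < n then l ⟨j, h⟩ else 0 with hLdef
  have hA0 : ∀ j, 0 ≤ A j := by
    intro j; simp only [hAdef]; split
    · exact hz _
    · exact le_refl 0
  have hL0 : ∀ j, 0 ≤ L j := by
    intro j; simp only [hLdef]; split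
    · exact hln _
    · exact le_refl 0
  have hAstep : ∀ j, A (j + 1) ≤ A j := by
    intro j
    by_cases h1 : j + 1 < n
    · have hj : j < n := lt_trans (Nat.lt_succ_self j) h1
      simp only [hAdef, dif_pos h1, dif_pos hj]
      exact hσ₀ ⟨j, hj⟩ ⟨j+1, h1⟩ (by simp [Fin.le_def])
    · simp only [hAdef, dif_neg h1]
      exact hA0 j
  have hLstep : ∀ j, L (j + 1) ≤ L j := by
    intro j
    by_cases h1 : j + 1 < n
    · have hj : j < n := lt_trans (Nat.lt_succ_self j) h1
      simp only [hLdef, dif_pos h1, dif_pos hj]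
      exact hl ⟨j, hj⟩ ⟨j+1, h1⟩ (by simp [Fin.le_def])
    · simp only [hLdef, dif_neg h1]
      exact hL0 j
  have hAanti : Antitone A := antitone_nat_of_succ_le hAstep
  have hLanti : Antitone L := antitone_nat_of_succ_le hLstep
  have hLn : L n = 0 := by simp [hLdef]
  set V : ℕ → ℝ := fun i => ∑ j ∈ Finset.Ico i n, L j * (A j - A (j+1)) with hVdef
  set W : ℕ → ℝ := fun k => ∑ j ∈ Finset.Ico k n, (L j - L (j+1)) * A (j+1) with hWdef
  have hVW : ∀ i, i ≤ n → V i + W i = L i * A i := by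
    intro i hi
    have : V i + W i = ∑ j ∈ Finset.Ico i n,
        ((fun j => L j * A j) j - (fun j => L j * A j) (j+1)) := by
      simp only [hVdef, hWdef, ← Finset.sum_add_distrib]
      exact Finset.sum_congr rfl (fun j _ => by ring)
    rw [this, tele_sum_aux (fun j => L j * A j) hi, hLn]
    ring
  have feas : ∀ i k, i < n → k < n → L k * A i ≤ V i + W k := by
    intro i k hi hk
    rcases le_total i k with hik | hki
    · -- i ≤ k : use W i = W k + Σ_{Ico i k}
      have hsplit : ∑ j ∈ Finset.Ico i k, (L j - L (j+1)) * A (j+1) + W k = W i := by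
        simp only [hWdef]
        exact Finset.sum_Ico_consecutive _ hik (le_of_lt hk)
      have hbound : ∑ j ∈ Finset.Ico i k, (L j - L (j+1)) * A (j+1)
          ≤ (L i - L k) * A i := by
        calc ∑ j ∈ Finset.Ico i k, (L j - L (j+1)) * A (j+1)
            ≤ ∑ j ∈ Finset.Ico i k, (L j - L (j+1)) * A i := by
              apply Finset.sum_le_sum
              intro j hj
              have hjm := Finset.mem_Ico.mp hj
              have h1 : 0 ≤ L j - L (j+1) := by linarith [hLstep j]
              have h2 : A (j+1) ≤ A i := hAanti (Nat.le_succ_of_le hjm.1)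
              exact mul_le_mul_of_nonneg_left h2 h1
          _ = (L i - L k) * A i := by
              rw [← Finset.sum_mul, tele_sum_aux L hik]
      have hVWi := hVW i (le_of_lt hi)
      nlinarith [hA0 i]
    · -- k ≤ i : use V k = V i + Σ_{Ico k i}
      have hsplit : ∑ j ∈ Finset.Ico k i, L j * (A j - A (j+1)) + V i = V k := by
        simp only [hVdef]
        exact Finset.sum_Ico_consecutive _ hki (le_of_lt hi)
      have hbound : ∑ j ∈ Finset.Ico k i, L j * (A j - A (j+1))
          ≤ L k * (A k - A i) := by
        calc ∑ j ∈ Finset.Ico k i, L j * (A j - A (j+1))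
            ≤ ∑ j ∈ Finset.Ico k i, L k * (A j - A (j+1)) := by
              apply Finset.sum_le_sum
              intro j hj
              have hjm := Finset.mem_Ico.mp hj
              have h1 : 0 ≤ A j - A (j+1) := by linarith [hAstep j]
              have h2 : L j ≤ L k := hLanti hjm.1
              exact mul_le_mul_of_nonneg_right h2 h1
          _ = L k * (A k - A i) := by
              rw [← Finset.mul_sum, tele_sum_aux A hki]
      have hVWk := hVW k (le_of_lt hk)
      nlinarith [hL0 k]
  have hAval : ∀ i : Fin n, A (i : ℕ) = z (σ₀ i) := by
    intro i; simp only [hAdef, dif_pos i.isLt, Fin.eta]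
  have hLval : ∀ i : Fin n, L (i : ℕ) = l i := by
    intro i; simp only [hLdef, dif_pos i.isLt, Fin.eta]
  constructor
  · -- membership : exhibit the optimal dual pair
    refine ⟨fun i => V ((σ₀.symm i : Fin n) : ℕ), fun k => W (k : ℕ), ?_, ?_⟩
    · intro i k
      have h1 : l k * z i = L (k : ℕ) * A ((σ₀.symm i : Fin n) : ℕ) := by
        rw [hLval, hAval, Equiv.apply_symm_apply]
      rw [h1]
      exact feas _ _ (σ₀.symm i).isLt k.isLt
    · have h1 : ∑ k : Fin n, V ((σ₀.symm k : Fin n) : ℕ)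
          = ∑ k : Fin n, V (k : ℕ) :=
        Equiv.sum_comp σ₀.symm (fun k : Fin n => V (k : ℕ))
      rw [h1, ← Finset.sum_add_distrib]
      refine Finset.sum_congr rfl (fun i _ => ?_)
      rw [hVW (i : ℕ) (le_of_lt i.isLt), hLval, hAval]
  · -- lower bound : weak duality, pointwise
    rintro c ⟨v, w, hvw, rfl⟩
    have h1 : ∑ i, l i * z (σ₀ i) ≤ ∑ i : Fin n, (v (σ₀ i) + w i) :=
      Finset.sum_le_sum (fun i _ => hvw (σ₀ i) i)
    have h2 : ∑ i : Fin n, (v (σ₀ i) + w i) = ∑ k, v k + ∑ i, w i := by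
      rw [Finset.sum_add_distrib, Equiv.sum_comp σ₀ v]
    linarith
end

section
/- For z ∈ ℝ^n, x ∈ ℝ^d, demand points a_1,...,a_n ∈ ℝ^d, weights ω_i ≥ 0, and λ_1 ≥ ... ≥ λ_n ≥ 0, the ordered median objective min over x of Σ_i λ_i ω_{σ(i)}‖x − a_{σ(i)}‖ (where σ sorts the weighted distances nonincreasingly) equals min over (x, z, v, w) of Σ_k v_k + Σ_i w_i subject to v_i + w_k ≥ λ_k z_i for all i,k, and z_i ≥ ω_i‖x − a_i‖ for all i. -/
set_option maxRecDepth 4000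


open Finset

private lemma telescope_aux (n : ℕ) (L : ℕ → ℝ) (j : ℕ) (hj : j < n) (hLn : L n = 0) :
    ∑ k ∈ Finset.range n, (if j ≤ k then L k - L (k+1) else 0) = L j := by
  rw [← Finset.sum_filter]
  have h1 : (Finset.range n).filter (fun k => j ≤ k) = Finset.Ico j n := by
    ext k; simp [Finset.mem_Ico, and_comm]
  rw [h1, Finset.sum_Ico_eq_sum_range]
  have h2 : ∀ k, L (j + k) - L (j + k + 1) = (fun i => L (j + i)) k - (fun i => L (j + i)) (k+1) := by
    intro k; simp [Nat.add_assoc]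
  simp only [h2]
  rw [Finset.sum_range_sub' (fun i => L (j + i))]
  rw [Nat.add_sub_cancel' hj.le, hLn, sub_zero, add_zero]

/-- The unconstrained ordered median problem equals its lifted LP-duality
reformulation: min_x Σ λ_i ω_{σ(i)}‖x − a_{σ(i)}‖ (σ sorting the weighted
distances nonincreasingly) equals the infimum of Σ v_k + Σ w_i over (x,z,v,w)
with v_i + w_k ≥ λ_k z_i and z_i ≥ ω_i‖x − a i‖. -/
theorem stmt_14 {E : Type*} [NormedAddCommGroup E] (n : ℕ)
    (a : Fin n → E) (ω l : Fin n → ℝ)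
    (hω : ∀ i, 0 ≤ ω i)
    (hl : ∀ i j : Fin n, i ≤ j → l j ≤ l i) (hln : ∀ i, 0 ≤ l i) :
    sInf {val : ℝ | ∃ x : E, ∃ σ : Equiv.Perm (Fin n),
        (∀ i j : Fin n, i ≤ j →
          ω (σ j) * ‖x - a (σ j)‖ ≤ ω (σ i) * ‖x - a (σ i)‖) ∧
        val = ∑ i, l i * (ω (σ i) * ‖x - a (σ i)‖)} =
    sInf {c : ℝ | ∃ x : E, ∃ z v w : Fin n → ℝ,
        (∀ i k : Fin n, l k * z i ≤ v i + w k) ∧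
        (∀ i, ω i * ‖x - a i‖ ≤ z i) ∧
        c = ∑ k, v k + ∑ i, w i} := by
  set A := {val : ℝ | ∃ x : E, ∃ σ : Equiv.Perm (Fin n),
        (∀ i j : Fin n, i ≤ j →
          ω (σ j) * ‖x - a (σ j)‖ ≤ ω (σ i) * ‖x - a (σ i)‖) ∧
        val = ∑ i, l i * (ω (σ i) * ‖x - a (σ i)‖)} with hA
  set B := {c : ℝ | ∃ x : E, ∃ z v w : Fin n → ℝ,
        (∀ i k : Fin n, l k * z i ≤ v i + w k) ∧
        (∀ i, ω i * ‖x - a i‖ ≤ z i) ∧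
        c = ∑ k, v k + ∑ i, w i} with hB
  -- a sorting permutation exists for every x
  have hsort : ∀ x : E, ∃ σ : Equiv.Perm (Fin n),
      ∀ i j : Fin n, i ≤ j →
        ω (σ j) * ‖x - a (σ j)‖ ≤ ω (σ i) * ‖x - a (σ i)‖ := by
    intro x
    refine ⟨Tuple.sort (fun i => -(ω i * ‖x - a i‖)), fun i j hij => ?_⟩
    have := Tuple.monotone_sort (fun i => -(ω i * ‖x - a i‖)) hij
    simpa using this
  -- A dominates B: for every a ∈ A there is b ∈ B with b ≤ a
  have hAB : ∀ r ∈ A, ∃ s ∈ B, s ≤ r := by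
    rintro r ⟨x, σ, hσ, rfl⟩
    -- z, y, Δ
    set z : Fin n → ℝ := fun i => ω i * ‖x - a i‖ with hz
    set y : Fin n → ℝ := fun k => z (σ k) with hy
    have hz0 : ∀ i, 0 ≤ z i := fun i => mul_nonneg (hω i) (norm_nonneg _)
    have hyanti : ∀ i j : Fin n, i ≤ j → y j ≤ y i := fun i j hij => hσ i j hij
    set L : ℕ → ℝ := fun m => if h : m < n then l ⟨m, h⟩ else 0 with hL
    have hLfin : ∀ k : Fin n, L (k : ℕ) = l k := by
      intro k; simp [hL, k.isLt]
    have hLn : L n = 0 := by simp [hL]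
    have hLstep : ∀ m, L (m + 1) ≤ L m := by
      intro m
      by_cases h1 : m + 1 < n
      · have h0 : m < n := Nat.lt_of_succ_lt h1
        simp only [hL, dif_pos h1, dif_pos h0]
        exact hl ⟨m, h0⟩ ⟨m + 1, h1⟩ (by simp [Fin.le_def])
      · by_cases h0 : m < n
        · simp only [hL, dif_neg h1, dif_pos h0]
          exact hln _
        · simp [hL, dif_neg h1, dif_neg h0]
    set Δ : Fin n → ℝ := fun k => L k - L ((k : ℕ) + 1) with hΔ
    have hΔ0 : ∀ k, 0 ≤ Δ k := fun k => sub_nonneg.mpr (hLstep k)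
    -- telescoping: ∑_{k ≥ j} Δ k = l j
    have htel : ∀ j : Fin n, ∑ k : Fin n, (if j ≤ k then Δ k else 0) = l j := by
      intro j
      have := telescope_aux n L j j.isLt hLn
      rw [← hLfin j, ← this]
      rw [← Fin.sum_univ_eq_sum_range (fun k => if (j : ℕ) ≤ k then L k - L (k+1) else 0) n]
      refine Finset.sum_congr rfl fun k _ => ?_
      show (if j ≤ k then Δ k else 0) = if (j : ℕ) ≤ (k : ℕ) then L k - L ((k:ℕ)+1) else 0
      by_cases h : j ≤ k
      · rw [if_pos h, if_pos (Fin.le_def.mp h)]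
      · rw [if_neg h, if_neg (fun hh => h (Fin.le_def.mpr hh))]
    set v : Fin n → ℝ := fun i => ∑ k : Fin n, Δ k * max (z i - y k) 0 with hv
    set w : Fin n → ℝ := fun k => ∑ m : Fin n, (if k ≤ m then Δ m * y m else 0) with hw
    refine ⟨∑ k, v k + ∑ i, w i, ⟨x, z, v, w, ?_, fun i => le_refl _, rfl⟩, le_of_eq ?_⟩
    · -- feasibility: l k * z i ≤ v i + w k
      intro i k
      have h1 : l k * z i = ∑ m : Fin n, (if k ≤ m then Δ m * z i else 0) := by
        rw [← htel k, Finset.sum_mul]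
        exact Finset.sum_congr rfl fun m _ => by rw [ite_mul, zero_mul]
      have h2 : ∀ m : Fin n, (if k ≤ m then Δ m * z i else 0) ≤
          Δ m * max (z i - y m) 0 + (if k ≤ m then Δ m * y m else 0) := by
        intro m
        by_cases h : k ≤ m
        · rw [if_pos h, if_pos h]
          have hmx := le_max_left (z i - y m) (0:ℝ)
          nlinarith [hΔ0 m]
        · rw [if_neg h, if_neg h, add_zero]
          exact mul_nonneg (hΔ0 m) (le_max_right _ _)
      calc l k * z i = ∑ m : Fin n, (if k ≤ m then Δ m * z i else 0) := h1
        _ ≤ ∑ m : Fin n, (Δ m * max (z i - y m) 0 + (if k ≤ m then Δ m * y m else 0)) :=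
          Finset.sum_le_sum fun m _ => h2 m
        _ = v i + w k := Finset.sum_add_distrib
    · -- value equality
      have hmaxv : ∀ (k j : Fin n), Δ k * max (y j - y k) 0 =
          if j ≤ k then Δ k * (y j - y k) else 0 := by
        intro k j
        by_cases h : j ≤ k
        · rw [if_pos h, max_eq_left (sub_nonneg.mpr (hyanti j k h))]
        · rw [if_neg h, max_eq_right (sub_nonpos.mpr (hyanti k j (le_of_not_ge h))), mul_zero]
      have hsv : ∑ i, v i = ∑ k : Fin n, ∑ j : Fin n,
          (if j ≤ k then Δ k * (y j - y k) else 0) := by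
        rw [show (∑ i, v i) = ∑ i : Fin n, ∑ k : Fin n, Δ k * max (z i - y k) 0 from rfl,
          Finset.sum_comm]
        refine Finset.sum_congr rfl fun k _ => ?_
        rw [← Equiv.sum_comp σ (fun i => Δ k * max (z i - y k) 0)]
        exact Finset.sum_congr rfl fun j _ => hmaxv k j
      have hsw : ∑ k, w k = ∑ k : Fin n, ∑ j : Fin n,
          (if j ≤ k then Δ k * y k else 0) := by
        rw [show (∑ k, w k) = ∑ k : Fin n, ∑ m : Fin n, (if k ≤ m then Δ m * y m else 0)
          from rfl, Finset.sum_comm]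
      rw [hsv, hsw, ← Finset.sum_add_distrib]
      have hcomb : ∀ k : Fin n,
          ((∑ j : Fin n, (if j ≤ k then Δ k * (y j - y k) else 0)) +
            ∑ j : Fin n, (if j ≤ k then Δ k * y k else 0)) =
          ∑ j : Fin n, (if j ≤ k then Δ k * y j else 0) := by
        intro k
        rw [← Finset.sum_add_distrib]
        refine Finset.sum_congr rfl fun j _ => ?_
        by_cases h : j ≤ k
        · rw [if_pos h, if_pos h, if_pos h]; ring
        · rw [if_neg h, if_neg h, if_neg h, add_zero]
      rw [Finset.sum_congr rfl fun k _ => hcomb k, Finset.sum_comm]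
      refine Finset.sum_congr rfl fun j _ => ?_
      have : ∑ k : Fin n, (if j ≤ k then Δ k * y j else 0) =
          (∑ k : Fin n, (if j ≤ k then Δ k else 0)) * y j := by
        rw [Finset.sum_mul]
        exact Finset.sum_congr rfl fun k _ => by rw [ite_mul, zero_mul]
      rw [this, htel j]
  -- B dominates A
  have hBA : ∀ s ∈ B, ∃ r ∈ A, r ≤ s := by
    rintro s ⟨x, z, v, w, hvw, hzd, rfl⟩
    obtain ⟨σ, hσ⟩ := hsort x
    refine ⟨∑ i, l i * (ω (σ i) * ‖x - a (σ i)‖), ⟨x, σ, hσ, rfl⟩, ?_⟩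
    have h1 : ∑ i, l i * (ω (σ i) * ‖x - a (σ i)‖) ≤ ∑ i, l i * z (σ i) :=
      Finset.sum_le_sum fun i _ => mul_le_mul_of_nonneg_left (hzd (σ i)) (hln i)
    have h2 : ∑ i, l i * z (σ i) ≤ ∑ i, (v (σ i) + w i) :=
      Finset.sum_le_sum fun i _ => hvw (σ i) i
    have h3 : ∑ i, (v (σ i) + w i) = ∑ k, v k + ∑ i, w i := by
      rw [Finset.sum_add_distrib, Equiv.sum_comp σ v]
    linarith
  -- nonemptiness and bounds
  have hBne : B.Nonempty := by
    obtain ⟨σ, hσ⟩ := hsort 0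
    obtain ⟨s, hs, _⟩ := hAB _ ⟨0, σ, hσ, rfl⟩
    exact ⟨s, hs⟩
  have hAne : A.Nonempty := by
    obtain ⟨s, hs⟩ := hBne
    obtain ⟨r, hr, _⟩ := hBA s hs
    exact ⟨r, hr⟩
  have hAbdd : BddBelow A := by
    refine ⟨0, fun r hr => ?_⟩
    obtain ⟨x, σ, hσ, rfl⟩ := hr
    exact Finset.sum_nonneg fun i _ =>
      mul_nonneg (hln i) (mul_nonneg (hω _) (norm_nonneg _))
  have hBbdd : BddBelow B := by
    refine ⟨0, fun s hs => ?_⟩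
    obtain ⟨x, z, v, w, hvw, hzd, rfl⟩ := hs
    have : (0:ℝ) = ∑ i : Fin n, (0:ℝ) := by simp
    have key : ∀ i : Fin n, (0:ℝ) ≤ v i + w i := fun i =>
      le_trans (mul_nonneg (hln i) (le_trans (mul_nonneg (hω i) (norm_nonneg _)) (hzd i)))
        (hvw i i)
    calc (0:ℝ) ≤ ∑ i, (v i + w i) := Finset.sum_nonneg fun i _ => key i
      _ = ∑ k, v k + ∑ i, w i := Finset.sum_add_distrib
  refine le_antisymm (le_csInf hBne fun b hb => ?_) (le_csInf hAne fun r hr => ?_)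
  · obtain ⟨r, hr, hrb⟩ := hBA b hb
    exact (csInf_le hAbdd hr).trans hrb
  · obtain ⟨s, hs, hsr⟩ := hAB r hr
    exact (csInf_le hBbdd hs).trans hsr
end
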